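/- arXiv:1912.13249 — 4 statements merged into one kernel-verified Lean document; each statement's English description precedes it below -/
import Mathlib

section
/- Every Archimedean tenant with constant T is compensable with the same T: if a price vector p satisfies min_j p_j ≤ 0 and max_j p_j = T, then the tenant has a best room j* with p_{j*} < T. -/
lemma exists_best_finset {α : Type*} (pref : α → α → Prop)
    (htrans : Transitive pref) (htotal : ∀ a b, pref a b ∨ pref b a)
    (s : Finset α) (hs : s.Nonempty) : ∃ a ∈ s, ∀ b ∈ s, pref a b := by
  classical
  induction s using Finset.induction_on with
  | empty => exact absurd hs (by simp)
  | @insert x t hx ih =>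
    rcases t.eq_empty_or_nonempty with rfl | ht
    · refine ⟨x, by simp, ?_⟩
      intro b hb
      simp at hb
      subst hb
      have := htotal b b; tauto
    · obtain ⟨a, ha, hbest⟩ := ih ht
      rcases htotal x a with h | h
      · refine ⟨x, Finset.mem_insert_self _ _, ?_⟩
        intro b hb
        rcases Finset.mem_insert.mp hb with rfl | hb
        · rcases htotal b b with h' | h' <;> exact h'
        · exact htrans h (hbest b hb)
      · refine ⟨a, Finset.mem_insert_of_mem ha, ?_⟩
        intro b hb
        rcases Finset.mem_insert.mp hb with rfl | hb
        · exact h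
        · exact hbest b hb

/-- Every Archimedean tenant with constant T is compensable with the same T. -/
theorem archimedean_is_compensable (n : ℕ) (hn : 0 < n)
    (pref : (Fin n × ℝ) → (Fin n × ℝ) → Prop)  -- (room, price) preference, a ⪰ b
    (htrans : Transitive pref)
    (htotal : ∀ a b, pref a b ∨ pref b a)
    (hmono : ∀ (j : Fin n) (x δ : ℝ), 0 ≤ δ → pref (j, x) (j, x + δ))
    (T : ℝ) (hT : 0 < T)
    (harch : ∀ j j' : Fin n, pref (j, 0) (j', T))
    (p : Fin n → ℝ)
    (hmin : ∃ j, p j ≤ 0) (hmaxle : ∀ j, p j ≤ T) (hmaxeq : ∃ j, p j = T) :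
    ∃ jstar : Fin n, (∀ j, pref (jstar, p jstar) (j, p j)) ∧ p jstar < T := by
  classical
  obtain ⟨j0, hj0⟩ := hmin
  -- best element over all rooms
  obtain ⟨a, ha, hbest⟩ := exists_best_finset pref htrans htotal
    (Finset.univ.image (fun j => (j, p j)))
    (by
      refine ⟨(⟨0, hn⟩, p ⟨0, hn⟩), ?_⟩
      exact Finset.mem_image.mpr ⟨⟨0, hn⟩, Finset.mem_univ _, rfl⟩)
  obtain ⟨jm, _, rfl⟩ := Finset.mem_image.mp ha
  have hbest' : ∀ j : Fin n, pref (jm, p jm) (j, p j) := fun j =>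
    hbest _ (Finset.mem_image.mpr ⟨j, Finset.mem_univ _, rfl⟩)
  by_cases hmT : p jm < T
  · exact ⟨jm, hbest', hmT⟩
  · have hpm : p jm = T := le_antisymm (hmaxle jm) (not_lt.mp hmT)
    -- j0 beats jm: (j0, p j0) ⪰ (j0, 0) ⪰ (jm, T) = (jm, p jm)
    have h1 : pref (j0, p j0) (j0, (0:ℝ)) := by
      have := hmono j0 (p j0) (-p j0) (by linarith)
      simpa using this
    have h2 : pref (j0, p j0) (jm, p jm) := by
      rw [hpm]; exact htrans h1 (harch j0 jm)
    exact ⟨j0, fun j => htrans h2 (hbest' j), by linarith⟩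
end

section
/- Define the price map p_j(x) = T - (Tn - R)x_j on the standard simplex Δ^{n-1}, with T ≥ R, T > 0, n ≥ 2. If each agent's demand satisfies the compensable tenants condition with constant T, then at every point x on the boundary of the simplex (some coordinate zero), every agent has a best room j* (under prices p(x)) with x_{j*} > 0. That is, the induced labeling satisfies Sperner's boundary condition. -/
/-- With the price map p_j(x) = T - (Tn - R) x_j, compensable tenants induce
labelings satisfying Sperner's boundary condition. -/
theorem compensable_sperner_boundary (n : ℕ) (hn : 2 ≤ n) (R T : ℝ)
    (hTR : R ≤ T) (hT : 0 < T)
    (D : Fin n → (Fin n → ℝ) → Set (Fin n))  -- each agent's demand function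
    (hne : ∀ i p, (D i p).Nonempty)
    (hcomp : ∀ (i : Fin n) (p : Fin n → ℝ),
      (∃ j, p j ≤ 0) → (∀ j, p j ≤ T) → (∃ j, p j = T) →
      ∃ jstar ∈ D i p, p jstar < T) :
    ∀ x : Fin n → ℝ, (∀ j, 0 ≤ x j) → (∑ j, x j = 1) → (∃ j', x j' = 0) →
      ∀ i : Fin n, ∃ jstar ∈ D i (fun j => T - (T * n - R) * x j), 0 < x jstar := by
  intro x hx hsum hbd i
  obtain ⟨j', hj'⟩ := hbd
  set c : ℝ := T * n - R with hc_def
  have hn1 : (1 : ℝ) ≤ (n : ℝ) - 1 := by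
    have : (2 : ℝ) ≤ (n : ℝ) := by exact_mod_cast hn
    linarith
  have hc : T * ((n : ℝ) - 1) ≤ c := by
    have : (2 : ℝ) ≤ (n : ℝ) := by exact_mod_cast hn
    simp only [hc_def]; nlinarith
  have hcpos : 0 < c := by nlinarith
  set p : Fin n → ℝ := fun j => T - c * x j with hp_def
  -- all prices ≤ T
  have hle : ∀ j, p j ≤ T := by
    intro j
    have := mul_nonneg hcpos.le (hx j)
    simp only [hp_def]; linarith
  -- price T at j'
  have heq : ∃ j, p j = T := ⟨j', by simp [hp_def, hj']⟩
  -- some price ≤ 0: some coordinate ≥ 1/(n-1)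
  have hsum' : ∑ j ∈ Finset.univ.erase j', x j = 1 := by
    rw [Finset.sum_erase_eq_sub (Finset.mem_univ j'), hj', hsum]; ring
  have hcard : ((Finset.univ.erase j').card : ℝ) = (n : ℝ) - 1 := by
    rw [Finset.card_erase_of_mem (Finset.mem_univ j')]
    simp
    have : 1 ≤ n := by omega
    push_cast [Nat.cast_sub this]
    ring
  have hbig : ∃ j, 1 / ((n : ℝ) - 1) ≤ x j := by
    by_contra h
    push_neg at h
    have hne' : (Finset.univ.erase j').Nonempty := by
      rw [← Finset.card_pos, Finset.card_erase_of_mem (Finset.mem_univ j')]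
      simp; omega
    have hlt : ∑ j ∈ Finset.univ.erase j', x j <
        ∑ _j ∈ Finset.univ.erase j', 1 / ((n : ℝ) - 1) :=
      Finset.sum_lt_sum_of_nonempty hne' (fun j _ => h j)
    rw [Finset.sum_const, nsmul_eq_mul, hsum'] at hlt
    rw [hcard, mul_one_div, div_self (by linarith : (n : ℝ) - 1 ≠ 0)] at hlt
    exact lt_irrefl _ hlt
  obtain ⟨j0, hj0⟩ := hbig
  have hneg : ∃ j, p j ≤ 0 := by
    refine ⟨j0, ?_⟩
    have h1 : T ≤ c * (1 / ((n : ℝ) - 1)) := by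
      rw [mul_one_div, le_div_iff₀ (by linarith : (0:ℝ) < (n:ℝ) - 1)]
      nlinarith
    have h2 : c * (1 / ((n : ℝ) - 1)) ≤ c * x j0 :=
      mul_le_mul_of_nonneg_left hj0 hcpos.le
    show T - c * x j0 ≤ 0
    nlinarith [h1, h2, hcpos]
  obtain ⟨jstar, hmem, hlt⟩ := hcomp i p hneg hle heq
  refine ⟨jstar, hmem, ?_⟩
  by_contra h
  push_neg at h
  have : x jstar = 0 := le_antisymm h (hx jstar)
  simp [hp_def, this] at hlt
end

section
/- In a bipartite graph G between n-1 agents and n rooms (n ≥ 2), suppose there is a nonnegative edge weight function w such that the weight adjacent to each agent equals 1/(n-1) and the weight adjacent to each room equals 1/n. Then for any room r, the graph obtained by deleting r admits a perfect matching between the n-1 agents and the remaining n-1 rooms. -/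
/-- Secretive agent version: n-1 agents, n rooms, balanced weights
(1/(n-1) at each agent, 1/n at each room). Then after deleting any room r,
there is a perfect matching between the n-1 agents and the n-1 remaining rooms. -/
theorem secretive_agent_matching (n : ℕ) (hn : 2 ≤ n)
    (adj : Fin (n - 1) → Fin n → Prop)
    (w : Fin (n - 1) → Fin n → ℝ)
    (hw0 : ∀ i j, 0 ≤ w i j)
    (hsupp : ∀ i j, w i j ≠ 0 → adj i j)
    (hrow : ∀ i, ∑ j, w i j = 1 / (n - 1 : ℝ))
    (hcol : ∀ j, ∑ i, w i j = 1 / (n : ℝ)) :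
    ∀ r : Fin n, ∃ f : Fin (n - 1) → Fin n,
      Function.Injective f ∧ (∀ i, f i ≠ r) ∧ ∀ i, adj i (f i) := by
  classical
  intro r
  set t : Fin (n - 1) → Finset (Fin n) :=
    fun i => Finset.univ.filter (fun j => adj i j ∧ j ≠ r) with ht
  have hn1 : (0 : ℝ) < (n : ℝ) - 1 := by
    have : (2 : ℝ) ≤ (n : ℝ) := by exact_mod_cast hn
    linarith
  have hnpos : (0 : ℝ) < (n : ℝ) := by linarith
  have hall : ∀ s : Finset (Fin (n - 1)), s.card ≤ (s.biUnion t).card := by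
    intro s
    by_contra hlt
    push_neg at hlt
    set U := (s.biUnion t).card with hU
    -- weight inequality
    have key : (s.card : ℝ) / ((n : ℝ) - 1) ≤ ((U : ℝ) + 1) / n := by
      have lhs_eq : ∑ i ∈ s, ∑ j, w i j = (s.card : ℝ) / ((n : ℝ) - 1) := by
        rw [Finset.sum_congr rfl (fun i _ => hrow i), Finset.sum_const]
        have : ((n : ℝ) - 1) = ((n - 1 : ℕ) : ℝ) := by
          have : (1 : ℕ) ≤ n := by omega
          push_cast [Nat.cast_sub this]; ring
        rw [this]
        simp [div_eq_mul_inv, mul_comm]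
      set B := insert r (s.biUnion t) with hB
      have swap : ∑ i ∈ s, ∑ j, w i j = ∑ j, ∑ i ∈ s, w i j :=
        Finset.sum_comm
      have vanish : ∀ j ∈ Finset.univ \ B, ∑ i ∈ s, w i j = 0 := by
        intro j hj
        simp only [Finset.mem_sdiff, hB, Finset.mem_insert] at hj
        apply Finset.sum_eq_zero
        intro i hi
        by_contra hne
        have hadj := hsupp i j hne
        have hjr : j ≠ r := fun h => hj.2 (Or.inl h)
        have : j ∈ s.biUnion t := Finset.mem_biUnion.mpr ⟨i, hi, by
          simp [ht, hadj, hjr]⟩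
        exact hj.2 (Or.inr this)
      have step1 : ∑ j, ∑ i ∈ s, w i j = ∑ j ∈ B, ∑ i ∈ s, w i j := by
        rw [← Finset.sum_subset (Finset.subset_univ B)]
        intro x _ hx
        exact vanish x (Finset.mem_sdiff.mpr ⟨Finset.mem_univ x, hx⟩)
      have step2 : ∑ j ∈ B, ∑ i ∈ s, w i j ≤ ∑ j ∈ B, ∑ i, w i j := by
        apply Finset.sum_le_sum
        intro j _
        exact Finset.sum_le_sum_of_subset_of_nonneg (Finset.subset_univ s)
          (fun i _ _ => hw0 i j)
      have step3 : ∑ j ∈ B, ∑ i, w i j = (B.card : ℝ) / n := by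
        rw [Finset.sum_congr rfl (fun j _ => hcol j), Finset.sum_const]
        simp [div_eq_mul_inv, mul_comm]
      have cardB : (B.card : ℝ) ≤ (U : ℝ) + 1 := by
        have := Finset.card_insert_le r (s.biUnion t)
        exact_mod_cast this
      calc (s.card : ℝ) / ((n : ℝ) - 1) = ∑ j, ∑ i ∈ s, w i j := by
            rw [← swap, lhs_eq]
        _ = ∑ j ∈ B, ∑ i ∈ s, w i j := step1
        _ ≤ ∑ j ∈ B, ∑ i, w i j := step2
        _ = (B.card : ℝ) / n := step3
        _ ≤ ((U : ℝ) + 1) / n := by gcongr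
    have hU1 : (U : ℝ) + 1 ≤ (s.card : ℝ) := by
      have : U + 1 ≤ s.card := by omega
      exact_mod_cast this
    have hsn : (s.card : ℝ) ≤ (n : ℝ) - 1 := by
      have hc : s.card ≤ n - 1 := (Finset.card_le_univ s).trans (by simp)
      have : (s.card : ℝ) ≤ ((n - 1 : ℕ) : ℝ) := by exact_mod_cast hc
      have h1 : (1 : ℕ) ≤ n := by omega
      rwa [Nat.cast_sub h1, Nat.cast_one] at this
    have hpos : 0 < s.card := by omega
    have hposR : (0 : ℝ) < s.card := by exact_mod_cast hpos
    -- derive contradiction: s.card * n ≤ s.card * (n-1)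
    have h1 : (s.card : ℝ) * n ≤ ((U : ℝ) + 1) * ((n : ℝ) - 1) := by
      rw [div_le_div_iff₀ hn1 hnpos] at key
      linarith
    nlinarith
  obtain ⟨f, hinj, hf⟩ := (Finset.all_card_le_biUnion_card_iff_exists_injective t).mp hall
  refine ⟨f, hinj, ?_, ?_⟩ <;> intro i <;>
    · have := hf i
      simp [ht] at this
      tauto
end

section
/- In a bipartite graph G between n+1 agents and n rooms, suppose there is a nonnegative edge weight function w such that the weight adjacent to each agent equals 1/(n+1) and the weight adjacent to each room equals 1/n. Then for any agent i, the graph obtained by deleting i admits a perfect matching between the remaining n agents and the n rooms. -/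
/-!
Fix the deleted agent `i₀` and a set `s` of `k` rooms. The weight on `s` is `k / n`; apart from
at most `1 / (n + 1)` coming from `i₀`, it sits on the remaining agents adjacent to `s`, each
carrying at most `1 / (n + 1)`. Hence more than `k - 1` of them, i.e. at least `k`, are adjacent
to `s`, and Hall's theorem gives the matching.
-/

open Finset

theorem card_mul_le_card_mul_of_support_subset {α β : Type*} [Fintype α] [Fintype β]
    {w : α → β → ℝ} {a b : ℝ} (s : Finset β) (T : Finset α) (hw0 : ∀ i j, 0 ≤ w i j)
    (hrow : ∀ i ∈ T, ∑ j, w i j ≤ a) (hcol : ∀ j ∈ s, ∑ i, w i j = b)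
    (hsupp : ∀ j ∈ s, ∀ i, w i j ≠ 0 → i ∈ T) :
    #s * b ≤ #T * a :=
  calc (#s : ℝ) * b = ∑ j ∈ s, ∑ i, w i j := by rw [sum_congr rfl hcol, sum_const, nsmul_eq_mul]
    _ = ∑ j ∈ s, ∑ i ∈ T, w i j := by
        refine sum_congr rfl fun j hj => (sum_subset (subset_univ T) fun i _ hiT => ?_).symm
        exact not_not.mp fun hne => hiT (hsupp j hj i hne)
    _ = ∑ i ∈ T, ∑ j ∈ s, w i j := sum_comm
    _ ≤ ∑ i ∈ T, ∑ j, w i j := sum_le_sum fun i _ =>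
        sum_le_sum_of_subset_of_nonneg (subset_univ s) fun j _ _ => hw0 i j
    _ ≤ #T * a := by
        rw [← nsmul_eq_mul, ← sum_const]
        exact sum_le_sum hrow

theorem le_of_div_le_add_one_div_add_one {k m n : ℕ} (hn : 0 < n)
    (h : (k : ℝ) * (1 / n) ≤ (m + 1) * (1 / (n + 1))) : k ≤ m := by
  have hn' : (0 : ℝ) < n := by exact_mod_cast hn
  rw [mul_one_div, mul_one_div, div_le_div_iff₀ hn' (by positivity)] at h
  have h' : k * (n + 1) ≤ (m + 1) * n := by exact_mod_cast h
  nlinarith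

theorem extra_agent_matching_general (n : ℕ)
    (adj : Fin (n + 1) → Fin n → Prop)
    (w : Fin (n + 1) → Fin n → ℝ)
    (hw0 : ∀ i j, 0 ≤ w i j)
    (hsupp : ∀ i j, w i j ≠ 0 → adj i j)
    (hrow : ∀ i, ∑ j, w i j = 1 / (n + 1 : ℝ))
    (hcol : ∀ j, ∑ i, w i j = 1 / (n : ℝ)) :
    ∀ i₀ : Fin (n + 1), ∃ f : Fin n → Fin (n + 1),
      Function.Injective f ∧ (∀ j, f j ≠ i₀) ∧ ∀ j, adj (f j) j := by
  classical
  intro i₀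
  let t : Fin n → Finset (Fin (n + 1)) := fun j => {i | adj i j ∧ i ≠ i₀}
  have hall (s : Finset (Fin n)) : #s ≤ #(s.biUnion t) := by
    rcases s.eq_empty_or_nonempty with rfl | ⟨j, -⟩
    · simp
    have hweight := card_mul_le_card_mul_of_support_subset s (insert i₀ (s.biUnion t)) hw0
      (fun i _ => (hrow i).le) (fun j _ => hcol j) fun j hj i hi => by
        rw [mem_insert, mem_biUnion]
        exact or_iff_not_imp_left.mpr fun hii₀ => ⟨j, hj, by simp [t, hsupp i j hi, hii₀]⟩
    have hinsert : (#(insert i₀ (s.biUnion t)) : ℝ) ≤ #(s.biUnion t) + 1 := by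
      exact_mod_cast card_insert_le i₀ _
    refine le_of_div_le_add_one_div_add_one j.pos (hweight.trans ?_)
    gcongr
  obtain ⟨f, hinj, hf⟩ := (all_card_le_biUnion_card_iff_exists_injective t).mp hall
  simp only [t, mem_filter, mem_univ, true_and] at hf
  exact ⟨f, hinj, fun j => (hf j).2, fun j => (hf j).1⟩

/-- Extra agent version: n+1 agents, n rooms, balanced weights
(1/(n+1) at each agent, 1/n at each room). Then after deleting any agent i,
there is a perfect matching between the remaining n agents and the n rooms. -/
theorem extra_agent_matching (n : ℕ) (hn : 1 ≤ n)
    (adj : Fin (n + 1) → Fin n → Prop)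
    (w : Fin (n + 1) → Fin n → ℝ)
    (hw0 : ∀ i j, 0 ≤ w i j)
    (hsupp : ∀ i j, w i j ≠ 0 → adj i j)
    (hrow : ∀ i, ∑ j, w i j = 1 / (n + 1 : ℝ))
    (hcol : ∀ j, ∑ i, w i j = 1 / (n : ℝ)) :
    ∀ i₀ : Fin (n + 1), ∃ f : Fin n → Fin (n + 1),
      Function.Injective f ∧ (∀ j, f j ≠ i₀) ∧ ∀ j, adj (f j) j :=
  extra_agent_matching_general n adj w hw0 hsupp hrow hcol
end
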